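/- Let $\mathcal{S}_2 \subseteq \mathcal{S}_1$ be closed convex subsets of $\mathbb{R}^n$, $\psi$ differentiable and strictly convex with Bregman divergence $D$, and define prox-mappings $x_1^+ = P_{x,\mathcal{S}_1}(y_1)$, $x_2^+ = P_{x,\mathcal{S}_2}(y_2)$ as in the generalized mirror step. Then for any $p \in \mathcal{S}_2$: $D(p, x_2^+) \le D(p, x) + \langle y_2, x_1^+ - p\rangle + \langle y_1 - y_2, x_1^+ - x_2^+\rangle - D(x_2^+, x_1^+) - D(x_1^+, x)$. -/

import Mathlib

/-!
Both prox points satisfy the first-order optimality condition `∇ψ x + y ∈ ∇ψ x⁺ + N_S(x⁺)`;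
tested against `p ∈ S₂` for `x₂⁺` and against `x₂⁺ ∈ S₂ ⊆ S₁` for `x₁⁺`, this gives two
inequalities. The three-point identity of the Bregman divergence, applied along
`p, x₂⁺, x` and `x₂⁺, x₁⁺, x`, turns their sum into the claim.
-/

open scoped RealInnerProductSpace

section
variable {E : Type*} [NormedAddCommGroup E] [InnerProductSpace ℝ E] [CompleteSpace E]

theorem Convex.inner_le_inner_gradient_of_isMinOn {S : Set E} (hS : Convex ℝ S) {f : E → ℝ}
    {w z p : E} (hz : z ∈ S) (hp : p ∈ S) (hf : DifferentiableAt ℝ f z)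
    (hmin : IsMinOn (fun u => f u - ⟪w, u⟫) S z) :
    ⟪w, p - z⟫ ≤ ⟪gradient f z, p - z⟫ := by
  have hderiv : HasFDerivAt (fun u => f u - ⟪w, u⟫) (fderiv ℝ f z - innerSL ℝ w) z :=
    hf.hasFDerivAt.sub (innerSL ℝ w).hasFDerivAt
  have htangent : p - z ∈ posTangentConeAt S z :=
    sub_mem_posTangentConeAt_of_segment_subset (hS.segment_subset hz hp)
  have hnonneg := hmin.localize.hasFDerivWithinAt_nonneg hderiv.hasFDerivWithinAt htangent
  rw [← toDual_gradient] at hnonneg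
  simpa [sub_nonneg] using hnonneg

noncomputable def bregmanDiv (ψ : E → ℝ) (p z : E) : ℝ := ψ p - ψ z - ⟪gradient ψ z, p - z⟫

theorem bregmanDiv_three_point (ψ : E → ℝ) (a b c : E) :
    bregmanDiv ψ a c =
      bregmanDiv ψ a b + bregmanDiv ψ b c + ⟪gradient ψ b - gradient ψ c, a - b⟫ := by
  simp only [bregmanDiv, inner_sub_left, inner_sub_right]
  ring

/-- `xp = P_{x,S}(y)` in the paper's notation. -/
def IsProxPoint (ψ : E → ℝ) (S : Set E) (x y xp : E) : Prop :=
  xp ∈ S ∧ ∀ x' ∈ S, ⟪y, x - xp⟫ + bregmanDiv ψ xp x ≤ ⟪y, x - x'⟫ + bregmanDiv ψ x' x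

theorem IsProxPoint.inner_le {ψ : E → ℝ} {S : Set E} {x y xp p : E}
    (h : IsProxPoint ψ S x y xp) (hS : Convex ℝ S) (hp : p ∈ S)
    (hψ : DifferentiableAt ℝ ψ xp) :
    ⟪y, p - xp⟫ ≤ ⟪gradient ψ xp - gradient ψ x, p - xp⟫ := by
  obtain ⟨hxp, hmin⟩ := h
  -- up to a constant, the prox objective is `ψ - ⟪y + ∇ψ x, ·⟫`
  have hmin' : IsMinOn (fun u => ψ u - ⟪y + gradient ψ x, u⟫) S xp :=
    isMinOn_iff.2 fun x' hx' => by
      have h' := hmin x' hx'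
      simp only [bregmanDiv, inner_sub_right, inner_add_left] at h' ⊢
      linarith
  have hopt := hS.inner_le_inner_gradient_of_isMinOn hxp hp hψ hmin'
  rw [inner_add_left] at hopt
  rw [inner_sub_left]
  linarith

end

theorem stmt12_general {n : ℕ} (S₁ S₂ C : Set (EuclideanSpace ℝ (Fin n)))
    (ψ : EuclideanSpace ℝ (Fin n) → ℝ)
    (hS21 : S₂ ⊆ S₁) (hS1C : S₁ ⊆ C)
    (hS₁conv : Convex ℝ S₁)
    (hS₂conv : Convex ℝ S₂)
    (hdiff : ∀ z ∈ C, DifferentiableAt ℝ ψ z)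
    (Dv : EuclideanSpace ℝ (Fin n) → EuclideanSpace ℝ (Fin n) → ℝ)
    (hDv : ∀ p z, Dv p z = ψ p - ψ z - ⟪gradient ψ z, p - z⟫)
    (x y₁ y₂ x₁p x₂p : EuclideanSpace ℝ (Fin n))
    (hx₁p : x₁p ∈ S₁)
    (hmin₁ : ∀ x' ∈ S₁, ⟪y₁, x - x₁p⟫ + Dv x₁p x ≤ ⟪y₁, x - x'⟫ + Dv x' x)
    (hx₂p : x₂p ∈ S₂)
    (hmin₂ : ∀ x' ∈ S₂, ⟪y₂, x - x₂p⟫ + Dv x₂p x ≤ ⟪y₂, x - x'⟫ + Dv x' x) :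
    ∀ p ∈ S₂,
      Dv p x₂p ≤ Dv p x + ⟪y₂, x₁p - p⟫ + ⟪y₁ - y₂, x₁p - x₂p⟫
        - Dv x₂p x₁p - Dv x₁p x := by
  intro p hp
  obtain rfl : Dv = bregmanDiv ψ := funext fun p => funext fun z => hDv p z
  set g := gradient ψ
  have opt₁ : ⟪y₁, x₂p - x₁p⟫ ≤ ⟪g x₁p - g x, x₂p - x₁p⟫ :=
    IsProxPoint.inner_le ⟨hx₁p, hmin₁⟩ hS₁conv (hS21 hx₂p) (hdiff _ (hS1C hx₁p))
  have opt₂ : ⟪y₂, p - x₂p⟫ ≤ ⟪g x₂p - g x, p - x₂p⟫ :=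
    IsProxPoint.inner_le ⟨hx₂p, hmin₂⟩ hS₂conv hp (hdiff _ (hS1C (hS21 hx₂p)))
  calc bregmanDiv ψ p x₂p
      = bregmanDiv ψ p x - bregmanDiv ψ x₂p x₁p - bregmanDiv ψ x₁p x
          - ⟪g x₂p - g x, p - x₂p⟫ - ⟪g x₁p - g x, x₂p - x₁p⟫ := by
        rw [bregmanDiv_three_point ψ p x₂p x, bregmanDiv_three_point ψ x₂p x₁p x]
        ring
    _ ≤ bregmanDiv ψ p x - bregmanDiv ψ x₂p x₁p - bregmanDiv ψ x₁p x
          - ⟪y₂, p - x₂p⟫ - ⟪y₁, x₂p - x₁p⟫ := by linarith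
    _ = _ := by
        simp only [inner_sub_left, inner_sub_right]
        ring

theorem stmt12 {n : ℕ} (S₁ S₂ C : Set (EuclideanSpace ℝ (Fin n)))
    (ψ : EuclideanSpace ℝ (Fin n) → ℝ)
    (hS21 : S₂ ⊆ S₁) (hS1C : S₁ ⊆ C)
    (hS₁closed : IsClosed S₁) (hS₁conv : Convex ℝ S₁)
    (hS₂closed : IsClosed S₂) (hS₂conv : Convex ℝ S₂)
    (hCconv : Convex ℝ C)
    (hdiff : ∀ z ∈ C, DifferentiableAt ℝ ψ z)
    (hstrict : StrictConvexOn ℝ C ψ)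
    (Dv : EuclideanSpace ℝ (Fin n) → EuclideanSpace ℝ (Fin n) → ℝ)
    (hDv : ∀ p z, Dv p z = ψ p - ψ z - ⟪gradient ψ z, p - z⟫)
    (x y₁ y₂ x₁p x₂p : EuclideanSpace ℝ (Fin n)) (hx : x ∈ C)
    (hx₁p : x₁p ∈ S₁)
    (hmin₁ : ∀ x' ∈ S₁, ⟪y₁, x - x₁p⟫ + Dv x₁p x ≤ ⟪y₁, x - x'⟫ + Dv x' x)
    (hx₂p : x₂p ∈ S₂)
    (hmin₂ : ∀ x' ∈ S₂, ⟪y₂, x - x₂p⟫ + Dv x₂p x ≤ ⟪y₂, x - x'⟫ + Dv x' x) :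
    ∀ p ∈ S₂,
      Dv p x₂p ≤ Dv p x + ⟪y₂, x₁p - p⟫ + ⟪y₁ - y₂, x₁p - x₂p⟫
        - Dv x₂p x₁p - Dv x₁p x :=
  stmt12_general S₁ S₂ C ψ hS21 hS1C hS₁conv hS₂conv hdiff Dv hDv x y₁ y₂ x₁p x₂p hx₁p hmin₁ hx₂p
    hmin₂
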